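/- (Carryover relaxation, ℓ = 1) For T ≥ 2, the function g(ω) = Σ_{j=1}^{2}[Σ_{t=j}^{T−2+j} ω_t² − (1/(T−1))(Σ_{t=j}^{T−2+j} ω_t)² + Σ_{t=1}^{T−2+j} (2(T−2+2j−2t)/(T−1)) ω_t] over {ω ∈ ℝ^T : −1 ≤ ω_t ≤ 1, ω_t ≤ ω_{t+1}} is minimized at ω*_t = −1 + 2(t−1)/(T−1). -/

import Mathlib

open Finset

/-!
With `n = T - 1`, `g` splits into two window objectives
`q_j(ω) = Σ_{W_j} ω_t² − (1/n)(Σ_{W_j} ω_t)² + Σ_{W_j} b_{j,t} ω_t` on the windows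
`W_1 = {1, …, T−1}` and `W_2 = {2, …, T}`, plus the term `2T/(T−1) · ω_1` that the second linear
sum contributes outside its window. Since `|W_j| = n`, Cauchy–Schwarz makes each `q_j` a convex
quadratic, and the linear design `ω*` is a critical point of both, so it minimises each of them
globally; the remaining term is minimal at `ω_1 = −1 = ω*_1`.
-/

/-- The convex relaxation of the trace-optimal design objective with a one-period
carryover effect (`ℓ = 1`):
`g(ω) = Σ_{j=1}^{2}[Σ_{t=j}^{T−2+j} ω_t² − (1/(T−1))(Σ_{t=j}^{T−2+j} ω_t)²
  + Σ_{t=1}^{T−2+j} (2(T−2+2j−2t)/(T−1)) ω_t]`,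
with time `t = t.val + 1` for `t : Fin T`. -/
noncomputable def gCarry1 (T : ℕ) (ω : Fin T → ℝ) : ℝ :=
  ∑ j ∈ Finset.Icc (1 : ℕ) 2,
    ((∑ t ∈ Finset.univ.filter
        (fun t : Fin T => j ≤ (t : ℕ) + 1 ∧ (t : ℕ) + 1 ≤ T - 2 + j), ω t ^ 2)
      - (1 / ((T : ℝ) - 1)) * (∑ t ∈ Finset.univ.filter
        (fun t : Fin T => j ≤ (t : ℕ) + 1 ∧ (t : ℕ) + 1 ≤ T - 2 + j), ω t) ^ 2
      + ∑ t ∈ Finset.univ.filter (fun t : Fin T => (t : ℕ) + 1 ≤ T - 2 + j),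
          (2 * ((T : ℝ) - 2 + 2 * (j : ℝ) - 2 * (((t : ℕ) : ℝ) + 1)) / ((T : ℝ) - 1))
            * ω t)

section WindowObjective

variable {ι : Type*} (s : Finset ι) (c : ℝ)

def centeredSumSq (x : ι → ℝ) : ℝ :=
  ∑ t ∈ s, x t ^ 2 - c * (∑ t ∈ s, x t) ^ 2

def windowObjective (b x : ι → ℝ) : ℝ :=
  centeredSumSq s c x + ∑ t ∈ s, b t * x t

variable {s c}

theorem centeredSumSq_nonneg (hc : c * #s ≤ 1) (x : ι → ℝ) : 0 ≤ centeredSumSq s c x := by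
  have hsq : 0 ≤ ∑ t ∈ s, x t ^ 2 := sum_nonneg fun t _ => sq_nonneg (x t)
  rw [centeredSumSq, sub_nonneg]
  rcases le_or_gt 0 c with hc0 | hc0
  · calc c * (∑ t ∈ s, x t) ^ 2
        ≤ c * (#s * ∑ t ∈ s, x t ^ 2) := mul_le_mul_of_nonneg_left sq_sum_le_card_mul_sum_sq hc0
      _ = c * #s * ∑ t ∈ s, x t ^ 2 := (mul_assoc _ _ _).symm
      _ ≤ ∑ t ∈ s, x t ^ 2 := mul_le_of_le_one_left hsq hc
  · exact (mul_nonpos_of_nonpos_of_nonneg hc0.le (sq_nonneg _)).trans hsq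

theorem windowObjective_eq_add_of_stationary {a b : ι → ℝ}
    (hstat : ∀ t ∈ s, 2 * (a t - c * ∑ u ∈ s, a u) + b t = 0) (x : ι → ℝ) :
    windowObjective s c b x = windowObjective s c b a + centeredSumSq s c (x - a) := by
  have hgrad : ∑ t ∈ s, (2 * (a t - c * ∑ u ∈ s, a u) + b t) * (x t - a t) = 0 :=
    sum_eq_zero fun t ht => by rw [hstat t ht, zero_mul]
  simp only [windowObjective, centeredSumSq, Pi.sub_apply, add_mul, sub_mul, mul_sub,
    sum_add_distrib, sum_sub_distrib, pow_two, mul_assoc, mul_comm (x _) (a _), ← mul_sum]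
    at hgrad ⊢
  linear_combination hgrad

theorem windowObjective_le_of_stationary (hc : c * #s ≤ 1) {a b : ι → ℝ}
    (hstat : ∀ t ∈ s, 2 * (a t - c * ∑ u ∈ s, a u) + b t = 0) (x : ι → ℝ) :
    windowObjective s c b a ≤ windowObjective s c b x := by
  rw [windowObjective_eq_add_of_stationary hstat x]
  exact le_add_of_nonneg_right (centeredSumSq_nonneg hc _)

end WindowObjective

section LinearDesign

variable {n : ℕ}

noncomputable def linearDesign (n : ℕ) (t : Fin (n + 1)) : ℝ :=
  -1 + 2 * (t : ℝ) / n

theorem linearDesign_zero : linearDesign n 0 = -1 := by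
  simp [linearDesign]

theorem linearDesign_last (hn : n ≠ 0) : linearDesign n (Fin.last n) = 1 := by
  rw [linearDesign, Fin.val_last, mul_div_assoc, div_self (Nat.cast_ne_zero.2 hn)]
  norm_num

theorem linearDesign_mem_Icc (t : Fin (n + 1)) : linearDesign n t ∈ Set.Icc (-1) 1 := by
  have ht : (t : ℝ) ≤ n := by exact_mod_cast Fin.is_le t
  have hstep_nonneg : 0 ≤ 2 * (t : ℝ) / n := by positivity
  have hstep_le : 2 * (t : ℝ) / n ≤ 2 := div_le_of_le_mul₀ (by positivity) zero_le_two (by linarith)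
  constructor <;> unfold linearDesign <;> linarith

theorem linearDesign_monotone : Monotone (linearDesign n) := by
  intro s t hst
  unfold linearDesign
  gcongr
  exact_mod_cast hst

theorem linearDesign_add_rev (hn : n ≠ 0) (t : Fin (n + 1)) :
    linearDesign n t + linearDesign n t.rev = 0 := by
  have hrev : (t.rev : ℝ) = n - t := by
    rw [Fin.val_rev, Nat.cast_sub (by omega)]; push_cast; ring
  unfold linearDesign
  rw [hrev]
  field_simp
  ring

theorem sum_linearDesign (hn : n ≠ 0) : ∑ t, linearDesign n t = 0 := by
  have hrev : ∑ t : Fin (n + 1), linearDesign n t.rev = ∑ t, linearDesign n t :=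
    Equiv.sum_comp Fin.revPerm (linearDesign n)
  have hsum : ∑ t : Fin (n + 1), (linearDesign n t + linearDesign n t.rev) = 0 :=
    sum_eq_zero fun t _ => linearDesign_add_rev hn t
  rw [sum_add_distrib, hrev] at hsum
  linarith

theorem sum_erase_last_linearDesign (hn : n ≠ 0) :
    ∑ t ∈ univ.erase (Fin.last n), linearDesign n t = -1 := by
  rw [sum_erase_eq_sub (mem_univ _), sum_linearDesign hn, linearDesign_last hn]
  norm_num

theorem sum_erase_zero_linearDesign (hn : n ≠ 0) :
    ∑ t ∈ univ.erase 0, linearDesign n t = 1 := by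
  rw [sum_erase_eq_sub (mem_univ _), sum_linearDesign hn, linearDesign_zero]
  norm_num

end LinearDesign

theorem gCarry1_succ_eq {n : ℕ} (hn : n ≠ 0) (ω : Fin (n + 1) → ℝ) :
    gCarry1 (n + 1) ω =
      windowObjective (univ.erase (Fin.last n)) (1 / n)
          (fun t => 2 * (n - 1 - 2 * (t : ℝ)) / n) ω
        + windowObjective (univ.erase (0 : Fin (n + 1))) (1 / n)
          (fun t => 2 * (n + 1 - 2 * (t : ℝ)) / n) ω
        + 2 * (n + 1) / n * ω 0 := by
  have hlast (t : Fin (n + 1)) : (t : ℕ) + 1 ≤ n + 1 - 2 + 1 ↔ t ≠ Fin.last n := by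
    rw [Ne, Fin.ext_iff, Fin.val_last]; omega
  have hzero (t : Fin (n + 1)) : 2 ≤ (t : ℕ) + 1 ↔ t ≠ 0 := by
    rw [Ne, Fin.ext_iff, Fin.val_zero]; omega
  have hall (t : Fin (n + 1)) : (t : ℕ) + 1 ≤ n + 1 - 2 + 2 := by omega
  rw [gCarry1, show Icc 1 2 = {1, 2} from rfl, sum_pair (by norm_num)]
  simp only [hlast, hzero, hall, le_add_self, true_and, and_true, filter_true, filter_ne']
  rw [← add_sum_erase univ _ (mem_univ 0)]
  simp only [windowObjective, centeredSumSq]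
  push_cast
  simp only [Fin.val_zero, Nat.cast_zero]
  ring_nf

theorem stationary_linearDesign_erase_last {n : ℕ} (hn : n ≠ 0) :
    ∀ t ∈ univ.erase (Fin.last n),
      2 * (linearDesign n t - 1 / n * ∑ u ∈ univ.erase (Fin.last n), linearDesign n u)
        + 2 * (n - 1 - 2 * (t : ℝ)) / n = 0 := by
  intro t _
  rw [sum_erase_last_linearDesign hn, linearDesign]
  field_simp
  ring

theorem stationary_linearDesign_erase_zero {n : ℕ} (hn : n ≠ 0) :
    ∀ t ∈ univ.erase (0 : Fin (n + 1)),
      2 * (linearDesign n t - 1 / n * ∑ u ∈ univ.erase 0, linearDesign n u)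
        + 2 * (n + 1 - 2 * (t : ℝ)) / n = 0 := by
  intro t _
  rw [sum_erase_zero_linearDesign hn, linearDesign]
  field_simp
  ring

theorem one_div_mul_card_erase_le {n : ℕ} (a : Fin (n + 1)) :
    1 / (n : ℝ) * #(univ.erase a) ≤ 1 := by
  rw [card_erase_of_mem (mem_univ a), card_univ, Fintype.card_fin, Nat.add_sub_cancel]
  rcases eq_or_ne n 0 with rfl | hn
  · norm_num
  · rw [one_div_mul_cancel (by positivity)]

/-- For `T ≥ 2`, the carryover relaxation with `ℓ = 1` is minimized over
`{−1 ≤ ω_t ≤ 1, ω monotone}` at `ω*_t = −1 + 2(t−1)/(T−1)`. -/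
theorem carryover_one_lag_optimal (T : ℕ) (hT : 2 ≤ T)
    (ωstar : Fin T → ℝ) (hωstar : ∀ t, ωstar t = -1 + 2 * ((t : ℕ) : ℝ) / ((T : ℝ) - 1)) :
    ((∀ t, -1 ≤ ωstar t ∧ ωstar t ≤ 1) ∧ Monotone ωstar) ∧
      ∀ ω : Fin T → ℝ, (∀ t, -1 ≤ ω t ∧ ω t ≤ 1) → Monotone ω →
        gCarry1 T ωstar ≤ gCarry1 T ω := by
  obtain ⟨n, rfl⟩ : ∃ n, T = n + 1 := ⟨T - 1, by omega⟩
  have hn : n ≠ 0 := by omega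
  obtain rfl : ωstar = linearDesign n := funext fun t => by
    rw [hωstar, linearDesign, Nat.cast_add_one, add_sub_cancel_right]
  refine ⟨⟨linearDesign_mem_Icc, linearDesign_monotone⟩, fun ω hω _ => ?_⟩
  rw [gCarry1_succ_eq hn, gCarry1_succ_eq hn]
  gcongr ?_ + ?_ + _ * ?_
  · exact windowObjective_le_of_stationary (one_div_mul_card_erase_le _)
      (stationary_linearDesign_erase_last hn) ω
  · exact windowObjective_le_of_stationary (one_div_mul_card_erase_le _)
      (stationary_linearDesign_erase_zero hn) ω
  · rw [linearDesign_zero]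
    exact (hω 0).1
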